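/- (Stability implies preservation for a single load command.) Let (s, h) be well-behaved and let π be acyclic and disconnected in (s, h). Suppose the command x := π' is executed, where x ≠ root(π) and π' is not a proper prefix of π (and π' may equal π), yielding state (s[x ↦ h(⟨π'⟩_{s,h})], h). Then π is preserved from (s, h) to the new state; in particular π remains acyclic and disconnected, its footprint is unchanged, and its address is unchanged. -/
import Mathlib


/-- Variables. -/
abbrev Var := ℕ
/-- Fld names. -/
abbrev Fld := ℕ
/-- Object locations. -/
abbrev Loc := ℕ
/-- Addresses in the field-splitting style. -/
abbrev Addr := Loc × Fld
/-- Stacks (stores). -/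
abbrev Stack := Var → Loc
/-- Partial heaps. -/
abbrev Heap := Addr → Option Loc

/-- Follow a list of fields starting from a given address. -/
def lvalAux (h : Heap) : Addr → List Fld → Option Addr
  | a, [] => some a
  | a, f :: fs => (h a).bind fun ℓ => lvalAux h (ℓ, f) fs

/-- The address `⟨x.fs⟩_{s,h}` of the access path `x.fs`
    (`none` if undefined, and paths must have a nonempty field list). -/
def lval (s : Stack) (h : Heap) (x : Var) : List Fld → Option Addr
  | [] => none
  | f :: fs => lvalAux h (s x, f) fs

/-- Domain of a partial map. -/
def pdom {β : Type} (m : Addr → Option β) : Set Addr := {a | (m a).isSome}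

/-- Domain of a heap. -/
def hdom (h : Heap) : Set Addr := {a | (h a).isSome}

/-- The locations underlying a set of addresses. -/
def locs (A : Set Addr) : Set Loc := Prod.fst '' A

/-- The set of addresses of all (nonempty) prefixes of the path `x.fs`:
    the domain of its footprint. -/
def footDom (s : Stack) (h : Heap) (x : Var) (fs : List Fld) : Set Addr :=
  {a | ∃ gs : List Fld, gs ≠ [] ∧ gs <+: fs ∧ lval s h x gs = some a}

open Classical in
/-- The footprint `h⟨s, x.fs⟩` of the path `x.fs`: the partial map defined exactly
    on the addresses of prefixes of the path, mapping `⟨π'⟩` to `h ⟨π'⟩`. -/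
noncomputable def footprint (s : Stack) (h : Heap) (x : Var) (fs : List Fld) :
    Addr → Option (Option Loc) :=
  fun a => if a ∈ footDom s h x fs then some (h a) else none

/-- Acyclicity of the path `x.fs` in state `(s, h)`. -/
def Acyclic (s : Stack) (h : Heap) (x : Var) (fs : List Fld) : Prop :=
  (lval s h x fs).isSome ∧
  ∀ (gs' gs : List Fld) (a a' : Addr), gs' ≠ [] → gs' <+: gs → gs <+: fs →
    lval s h x gs = some a → lval s h x gs' = some a' → h a ≠ some a'.1

/-- Disconnectedness of the path `x.fs` in state `(s, h)`. -/
def Disconnected (s : Stack) (h : Heap) (x : Var) (fs : List Fld) : Prop :=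
  (lval s h x fs).isSome ∧
  (∀ y, y ≠ x → s y ∉ locs (footDom s h x fs)) ∧
  (∀ a ℓ, h a = some ℓ → ℓ ∈ locs (footDom s h x fs) → a ∈ footDom s h x fs)

/-- The path `x.fs` is preserved from `(s, h)` to `(s', h')`. -/
def Preserved (x : Var) (fs : List Fld) (s : Stack) (h : Heap)
    (s' : Stack) (h' : Heap) : Prop :=
  Disconnected s h x fs ∧ Acyclic s h x fs ∧
  Disconnected s' h' x fs ∧ Acyclic s' h' x fs ∧
  s x = s' x ∧
  footDom s h x fs = footDom s' h' x fs ∧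
  (∀ a ∈ footDom s h x fs, lval s h x fs ≠ some a → h a = h' a)

/-- Well-behavedness of a state. -/
def WellBehaved (s : Stack) (h : Heap) : Prop :=
  (∀ y, s y ∈ locs (hdom h)) ∧ (∀ a ℓ, h a = some ℓ → ℓ ∈ locs (hdom h))
lemma lvalAux_append (h : Heap) (a : Addr) (l1 l2 : List Fld) :
    lvalAux h a (l1 ++ l2) = (lvalAux h a l1).bind fun b => lvalAux h b l2 := by
  induction l1 generalizing a with
  | nil => simp [lvalAux]
  | cons f fs ih =>
    simp only [List.cons_append, lvalAux]
    cases h a with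
    | none => simp
    | some ℓ => simp [ih]

lemma lval_eq_of_root_eq (s s' : Stack) (h : Heap) (x : Var) (hx : s x = s' x)
    (l : List Fld) : lval s h x l = lval s' h x l := by
  cases l <;> simp [lval, hx]

lemma lval_singleton (s : Stack) (h : Heap) (x : Var) (f : Fld) :
    lval s h x [f] = some (s x, f) := by
  simp [lval, lvalAux]

lemma lval_concat_iff (s : Stack) (h : Heap) (x : Var) (u : List Fld) (hu : u ≠ [])
    (f : Fld) (a : Addr) :
    lval s h x (u ++ [f]) = some a ↔
      ∃ c ℓ, lval s h x u = some c ∧ h c = some ℓ ∧ a = (ℓ, f) := by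
  obtain ⟨g, u', rfl⟩ : ∃ g u', u = g :: u' := by
    cases u with
    | nil => exact absurd rfl hu
    | cons g u' => exact ⟨g, u', rfl⟩
  have hsplit : lval s h x ((g :: u') ++ [f])
      = (lval s h x (g :: u')).bind fun b => lvalAux h b [f] := by
    show lvalAux h (s x, g) (u' ++ [f]) = _
    rw [lvalAux_append]
    rfl
  rw [hsplit]
  cases hcase : lval s h x (g :: u') with
  | none => simp
  | some c =>
    have hrfl : lvalAux h c [f] = (h c).bind fun ℓ => some (ℓ, f) := rfl
    rw [Option.bind_some, hrfl]
    cases hc : h c with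
    | none => simp [hc]
    | some ℓ =>
      simp only [Option.bind_some, Option.some.injEq]
      constructor
      · rintro rfl
        exact ⟨c, ℓ, rfl, hc, rfl⟩
      · rintro ⟨c', ℓ', hc', hℓ', rfl⟩
        subst hc'
        rw [hc] at hℓ'
        have : ℓ = ℓ' := Option.some.inj hℓ'
        subst this
        rfl

/-- Locations along an acyclic path are distinct: if two nonempty prefixes of `fs`
have addresses with the same location, they are equal. -/
lemma loc_inj (s : Stack) (h : Heap) (z : Var) (fs : List Fld)
    (hac : Acyclic s h z fs) :
    ∀ (p q : List Fld), p ≠ [] → q ≠ [] → p <+: fs → q <+: fs →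
    ∀ (ap aq : Addr), lval s h z p = some ap → lval s h z q = some aq →
    ap.1 = aq.1 → p = q := by
  have key : ∀ (p q : List Fld), p ≠ [] → q ≠ [] → p <+: fs → q <+: fs →
      ∀ (ap aq : Addr), lval s h z p = some ap → lval s h z q = some aq →
      ap.1 = aq.1 → p <+: q → p = q := by
    intro p q hp hq hpf hqf ap aq hlp hlq hloc hpq
    by_contra hne
    -- q = q' ++ [f] with p <+: q'
    obtain ⟨q', f, hq'⟩ := (List.eq_nil_or_concat q).resolve_left hq
    rw [List.concat_eq_append] at hq'
    subst hq' 
    have hlen : p.length < (q' ++ [f]).length := by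
      rcases Nat.lt_or_ge p.length (q' ++ [f]).length with h1 | h1
      · exact h1
      · exact absurd (List.IsPrefix.eq_of_length_le hpq h1) hne
    have hpq' : p <+: q' := by
      rcases List.prefix_or_prefix_of_prefix hpq (List.prefix_append q' [f]) with h1 | h1
      · exact h1
      · have := List.IsPrefix.length_le h1
        have hle : p.length ≤ q'.length := by
          simp only [List.length_append, List.length_singleton] at hlen
          omega
        exact (List.IsPrefix.eq_of_length_le h1 (le_of_le_of_eq hle rfl)).symm ▸
          List.prefix_rfl
    have hq'ne : q' ≠ [] := by
      rintro rfl
      exact hp (List.prefix_nil.mp hpq')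
    obtain ⟨c, ℓ, hc, hℓ, rfl⟩ := (lval_concat_iff s h z q' hq'ne f aq).mp hlq
    exact hac.2 p q' c ap hp hpq' ((List.prefix_append q' [f]).trans hqf) hc hlp
      (by rw [hℓ]; exact congrArg some hloc ▸ rfl)
  intro p q hp hq hpf hqf ap aq hlp hlq hloc
  rcases List.prefix_or_prefix_of_prefix hpf hqf with h1 | h1
  · exact key p q hp hq hpf hqf ap aq hlp hlq hloc h1
  · exact (key q p hq hp hqf hpf aq ap hlq hlp hloc.symm h1).symm

/-- The "non-prefix lemma": if the address of `w.gs` lies in the footprint of the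
acyclic, disconnected path `z.fs`, then `w = z` and `gs` is a prefix of `fs`. -/
lemma mem_footDom_of_lval (s : Stack) (h : Heap) (z : Var) (fs : List Fld)
    (hac : Acyclic s h z fs) (hdisc : Disconnected s h z fs) (w : Var) :
    ∀ (gs : List Fld), gs ≠ [] → ∀ a : Addr, lval s h w gs = some a →
    a ∈ footDom s h z fs → w = z ∧ gs <+: fs := by
  have hfs : fs ≠ [] := by
    intro hfs
    have := hac.1
    rw [hfs] at this
    simp [lval] at this
  obtain ⟨f0, fs0, hfs0⟩ : ∃ f0 fs0, fs = f0 :: fs0 := by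
    cases fs with
    | nil => exact absurd rfl hfs
    | cons f0 fs0 => exact ⟨f0, fs0, rfl⟩
  intro gs
  induction gs using List.reverseRecOn with
  | nil => intro h1; exact absurd rfl h1
  | append_singleton u f ih =>
    intro _ a hla hamem
    obtain ⟨gs', hgs'ne, hgs'pre, hgs'lval⟩ := hamem
    by_cases hu : u = []
    · -- base case: a = (s w, f)
      subst hu
      rw [List.nil_append, lval_singleton] at hla
      have haeq : a = (s w, f) := (Option.some.inj hla).symm
      have hwz : w = z := by
        by_contra hwz
        exact hdisc.2.1 w hwz ⟨a, ⟨gs', hgs'ne, hgs'pre, hgs'lval⟩, by rw [haeq]⟩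
      subst hwz
      have h1f0 : lval s h w [f0] = some (s w, f0) := lval_singleton s h w f0
      have hpre0 : [f0] <+: fs := by rw [hfs0]; exact ⟨fs0, rfl⟩
      have heq := loc_inj s h w fs hac [f0] gs' (by simp) hgs'ne hpre0 hgs'pre
        (s w, f0) a h1f0 hgs'lval (by rw [haeq])
      rw [← heq] at hgs'lval
      rw [h1f0] at hgs'lval
      have : a = (s w, f0) := (Option.some.inj hgs'lval).symm
      have hf : f = f0 := by rw [haeq] at this; exact (Prod.mk.injEq _ _ _ _).mp this |>.2
      refine ⟨rfl, ?_⟩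
      rw [hf]
      exact hpre0
    · -- inductive case
      obtain ⟨c, ℓc, hc, hℓc, haeq⟩ := (lval_concat_iff s h w u hu f a).mp hla
      have haℓ : h c = some a.1 := by rw [haeq]; exact hℓc
      have hcmem : c ∈ footDom s h z fs :=
        hdisc.2.2 c a.1 haℓ ⟨a, ⟨gs', hgs'ne, hgs'pre, hgs'lval⟩, rfl⟩
      obtain ⟨hwz, hufs⟩ := ih hu c hc hcmem
      subst hwz
      refine ⟨rfl, ?_⟩
      by_cases hufseq : u = fs
      · exfalso
        rw [hufseq] at hc
        exact hac.2 gs' fs c a hgs'ne hgs'pre List.prefix_rfl hc hgs'lval haℓ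
      · -- u is a proper prefix of fs
        obtain ⟨t, ht⟩ := hufs
        obtain ⟨fn, t', rfl⟩ : ∃ fn t', t = fn :: t' := by
          cases t with
          | nil => rw [List.append_nil] at ht; exact absurd ht hufseq
          | cons fn t' => exact ⟨fn, t', rfl⟩
        have hpren : u ++ [fn] <+: fs := by
          refine ⟨t', ?_⟩
          rw [← ht]
          simp
        have hlvaln : lval s h w (u ++ [fn]) = some (a.1, fn) :=
          (lval_concat_iff s h w u hu fn (a.1, fn)).mpr ⟨c, a.1, hc, haℓ, rfl⟩
        have heq := loc_inj s h w fs hac (u ++ [fn]) gs' (by simp) hgs'ne hpren hgs'pre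
          (a.1, fn) a hlvaln hgs'lval rfl
        rw [← heq] at hgs'lval
        rw [hlvaln] at hgs'lval
        have haeq2 : (a.1, fn) = a := (Option.some.injEq _ _).mp hgs'lval
        have hf : fn = f := by
          rw [haeq] at haeq2
          exact ((Prod.mk.injEq _ _ _ _).mp haeq2).2
        rw [← hf]
        exact hpren

/-- (Stability implies preservation for a single load command.) Let
`(s, h)` be well-behaved and `π = z.fs` acyclic and disconnected in `(s, h)`. Executing
`x := π'` with `π' = w.gs`, where `x ≠ z = root π` and `π'` is not a proper prefix of
`π` (it may equal `π`), yields `(s[x ↦ h⟨π'⟩], h)`, and `π` is preserved from `(s, h)`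
to this new state. -/
theorem load_preserves_path (s : Stack) (h : Heap) (z w x : Var)
    (fs gs : List Fld) (hgs : gs ≠ [])
    (hwb : WellBehaved s h)
    (hac : Acyclic s h z fs) (hdisc : Disconnected s h z fs)
    (hx : x ≠ z)
    (hnp : ¬ (w = z ∧ gs <+: fs ∧ gs ≠ fs))
    (a : Addr) (ℓ : Loc) (ha : lval s h w gs = some a) (hℓ : h a = some ℓ) :
    Preserved z fs s h (Function.update s x ℓ) h := by
  set s' := Function.update s x ℓ with hs'
  have hsz : s z = s' z := by
    rw [hs']
    rw [Function.update_of_ne (Ne.symm hx)]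
  have hlval : ∀ l, lval s h z l = lval s' h z l :=
    lval_eq_of_root_eq s s' h z hsz
  have hfd : footDom s h z fs = footDom s' h z fs := by
    ext b
    simp only [footDom, Set.mem_setOf_eq]
    constructor
    · rintro ⟨gs0, h1, h2, h3⟩; exact ⟨gs0, h1, h2, by rw [← hlval]; exact h3⟩
    · rintro ⟨gs0, h1, h2, h3⟩; exact ⟨gs0, h1, h2, by rw [hlval]; exact h3⟩
  have hac' : Acyclic s' h z fs := by
    refine ⟨by rw [← hlval]; exact hac.1, ?_⟩
    intro gs0 gs1 a0 a1 h1 h2 h3 h4 h5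
    exact hac.2 gs0 gs1 a0 a1 h1 h2 h3 (by rw [hlval]; exact h4)
      (by rw [hlval]; exact h5)
  have hdisc' : Disconnected s' h z fs := by
    refine ⟨by rw [← hlval]; exact hdisc.1, ?_, ?_⟩
    · intro y hy
      rw [← hfd]
      by_cases hyx : y = x
      · subst hyx
        rw [hs', Function.update_self]
        -- show ℓ ∉ locs (footDom s h z fs)
        intro hmem
        have hafd : a ∈ footDom s h z fs := hdisc.2.2 a ℓ hℓ hmem
        obtain ⟨hwz, hgsfs⟩ := mem_footDom_of_lval s h z fs hac hdisc w gs hgs a ha hafd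
        have hgseq : gs = fs := by
          by_contra hne
          exact hnp ⟨hwz, hgsfs, hne⟩
        subst hwz; subst hgseq
        obtain ⟨b, hb, hbℓ⟩ := hmem
        obtain ⟨gs'', hne'', hpre'', hlval''⟩ := hb
        exact hac.2 gs'' gs a b hne'' hpre'' List.prefix_rfl ha hlval''
          (by rw [hℓ, hbℓ])
      · rw [hs', Function.update_of_ne hyx]
        exact hdisc.2.1 y hy
    · intro a0 ℓ0 h1 h2
      rw [← hfd] at h2 ⊢
      exact hdisc.2.2 a0 ℓ0 h1 h2
  exact ⟨hdisc, hac, hdisc', hac', hsz, hfd, fun _ _ _ => rfl⟩
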